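/- arXiv:2112.03886 — 8 statements merged into one kernel-verified Lean document; each statement's English description precedes it below -/
import Mathlib

section
/- Let A be an n×n symmetric Z-matrix (all off-diagonal entries nonpositive). Then A is positive semidefinite if and only if there exists a vector d with all components positive such that Ad ≥ 0 componentwise. -/
/-!
Backward direction: writing `x = d * y` with `d > 0`, symmetry of `A` gives
`2 xᵀAx = 2 ∑ᵢ dᵢ yᵢ² (Ad)ᵢ - ∑ᵢⱼ Aᵢⱼ dᵢ dⱼ (yᵢ - yⱼ)²`,
and both terms are nonnegative when `Ad ≥ 0` and the off-diagonal entries of `A` are nonpositive.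

Forward direction: for a Z-matrix, `pᵀAq ≤ 0` whenever `p, q ≥ 0` have disjoint supports.
Applied to the positive and negative parts `v⁺, v⁻` this gives `|v|ᵀA|v| ≤ vᵀAv`, and, when `A` is
positive definite and `Av ≥ 0`, `v⁻ᵀAv⁻ = v⁻ᵀAv⁺ - v⁻ᵀAv ≤ 0`, hence `v ≥ 0`; then `d = A⁻¹ 1`
is positive. If instead `A` is singular, a kernel vector `x` yields the nonnegative kernel vector
`|x|`. At a zero `i` of `x`, the row sum `(A|x|)ᵢ = 0` consists of nonpositive terms, so `Aᵢⱼ = 0`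
whenever `xⱼ ≠ 0`. Hence `A` decouples into the support of `x`, where `|x|` works, and the
principal submatrix on the zeros of `x`, which is handled by induction on the size.
-/

open Finset

theorem posPart_mul_negPart_eq_zero {α : Type*} [Ring α] [LinearOrder α] [IsOrderedRing α]
    (a : α) : a⁺ * a⁻ = 0 := by
  rcases le_total a 0 with h | h
  · simp [posPart_eq_zero.mpr h]
  · simp [negPart_eq_zero.mpr h]

namespace Matrix

variable {m n : Type*}

def IsZMatrix (A : Matrix m m ℝ) : Prop := ∀ i j, i ≠ j → A i j ≤ 0

namespace IsZMatrix

variable {A : Matrix m m ℝ}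

theorem submatrix (hA : A.IsZMatrix) {f : n → m} (hf : Function.Injective f) :
    (A.submatrix f f).IsZMatrix :=
  fun i j hij => hA (f i) (f j) (hf.ne hij)

theorem apply_mul_nonpos (hA : A.IsZMatrix) {b : m → ℝ} (hb : 0 ≤ b) {i : m} (hi : b i = 0)
    (k : m) : A i k * b k ≤ 0 := by
  rcases eq_or_ne i k with rfl | hik
  · simp [hi]
  · exact mul_nonpos_of_nonpos_of_nonneg (hA i k hik) (hb k)

end IsZMatrix

variable [Fintype m]

theorem IsSymm.two_mul_dotProduct_mulVec_mul {A : Matrix m m ℝ} (hA : A.IsSymm) (d y : m → ℝ) :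
    2 * ((d * y) ⬝ᵥ A *ᵥ (d * y)) =
      2 * ∑ i, d i * y i ^ 2 * (A *ᵥ d) i - ∑ i, ∑ j, A i j * d i * d j * (y i - y j) ^ 2 := by
  have hswap : ∑ i, ∑ j, A i j * d i * d j * y j ^ 2 =
      ∑ i, ∑ j, A i j * d i * d j * y i ^ 2 := by
    rw [sum_comm]
    refine sum_congr rfl fun i _ => sum_congr rfl fun j _ => ?_
    rw [hA.apply i j]
    ring
  have hrow : ∑ i, d i * y i ^ 2 * (A *ᵥ d) i = ∑ i, ∑ j, A i j * d i * d j * y i ^ 2 := by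
    simp only [mulVec, dotProduct, mul_sum]
    exact sum_congr rfl fun i _ => sum_congr rfl fun j _ => by ring
  have hquad : (d * y) ⬝ᵥ A *ᵥ (d * y) = ∑ i, ∑ j, A i j * d i * d j * (y i * y j) := by
    simp only [mulVec, dotProduct, mul_sum, Pi.mul_apply]
    exact sum_congr rfl fun i _ => sum_congr rfl fun j _ => by ring
  have hexpand : ∀ i j, A i j * d i * d j * (y i - y j) ^ 2 = A i j * d i * d j * y i ^ 2 +
      A i j * d i * d j * y j ^ 2 - 2 * (A i j * d i * d j * (y i * y j)) := fun i j => by ring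
  simp only [hexpand, sum_sub_distrib, sum_add_distrib, ← mul_sum, hswap, hrow, hquad]
  ring

namespace IsZMatrix

variable {A : Matrix m m ℝ}

theorem posSemidef_of_mulVec_nonneg (hA : A.IsZMatrix) (hsym : A.IsSymm) {d : m → ℝ}
    (hd : ∀ i, 0 < d i) (hAd : 0 ≤ A *ᵥ d) : A.PosSemidef := by
  refine .of_dotProduct_mulVec_nonneg (isHermitian_iff_isSymm.mpr hsym) fun x => ?_
  have hx : x = d * (x / d) := funext fun i => (mul_div_cancel₀ (x i) (hd i).ne').symm
  rw [star_trivial, hx]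
  have hdiag : 0 ≤ ∑ i, d i * (x / d) i ^ 2 * (A *ᵥ d) i :=
    sum_nonneg fun i _ => mul_nonneg (mul_nonneg (hd i).le (sq_nonneg _)) (hAd i)
  have hoff : ∑ i, ∑ j, A i j * d i * d j * ((x / d) i - (x / d) j) ^ 2 ≤ 0 := by
    refine sum_nonpos fun i _ => sum_nonpos fun j _ => ?_
    rcases eq_or_ne i j with rfl | hij
    · simp
    · have hAdd := mul_nonpos_of_nonpos_of_nonneg
        (mul_nonpos_of_nonpos_of_nonneg (hA i j hij) (hd i).le) (hd j).le
      exact mul_nonpos_of_nonpos_of_nonneg hAdd (sq_nonneg _)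
  linarith [hsym.two_mul_dotProduct_mulVec_mul d (x / d)]

theorem mulVec_apply_nonpos (hA : A.IsZMatrix) {b : m → ℝ} (hb : 0 ≤ b) {i : m}
    (hi : b i = 0) : (A *ᵥ b) i ≤ 0 :=
  sum_nonpos fun k _ => hA.apply_mul_nonpos hb hi k

theorem apply_eq_zero_of_mulVec_apply_eq_zero (hA : A.IsZMatrix) {b : m → ℝ} (hb : 0 ≤ b)
    {i j : m} (hAb : (A *ᵥ b) i = 0) (hi : b i = 0) (hj : 0 < b j) : A i j = 0 := by
  have hterm := (sum_eq_zero_iff_of_nonpos fun k _ => hA.apply_mul_nonpos hb hi k).mp hAb j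
    (mem_univ j)
  exact (mul_eq_zero.mp hterm).resolve_right hj.ne'

theorem dotProduct_mulVec_nonpos (hA : A.IsZMatrix) {p q : m → ℝ} (hp : 0 ≤ p) (hq : 0 ≤ q)
    (hpq : ∀ i, p i * q i = 0) : p ⬝ᵥ A *ᵥ q ≤ 0 := by
  simp only [dotProduct, mulVec, mul_sum]
  refine sum_nonpos fun i _ => sum_nonpos fun j _ => ?_
  rcases eq_or_ne i j with rfl | hij
  · linear_combination A i i * hpq i
  · exact mul_nonpos_of_nonneg_of_nonpos (hp i)
      (mul_nonpos_of_nonpos_of_nonneg (hA i j hij) (hq j))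

theorem abs_dotProduct_mulVec_abs_le (hA : A.IsZMatrix) (x : m → ℝ) :
    |x| ⬝ᵥ A *ᵥ |x| ≤ x ⬝ᵥ A *ᵥ x := by
  have hpq := hA.dotProduct_mulVec_nonpos (posPart_nonneg x) (negPart_nonneg x)
    fun i => posPart_mul_negPart_eq_zero (x i)
  have hqp := hA.dotProduct_mulVec_nonpos (negPart_nonneg x) (posPart_nonneg x)
    fun i => (mul_comm _ _).trans (posPart_mul_negPart_eq_zero (x i))
  have hpolar : ∀ p q : m → ℝ, (p + q) ⬝ᵥ A *ᵥ (p + q) =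
      (p - q) ⬝ᵥ A *ᵥ (p - q) + 2 * (p ⬝ᵥ A *ᵥ q + q ⬝ᵥ A *ᵥ p) := fun p q => by
    simp only [mulVec_add, mulVec_sub, dotProduct_add, dotProduct_sub, add_dotProduct,
      sub_dotProduct]
    ring
  rw [← posPart_add_negPart x, hpolar, posPart_sub_negPart]
  linarith

theorem nonneg_of_mulVec_nonneg (hA : A.IsZMatrix) (hpos : A.PosDef) {v : m → ℝ}
    (hv : 0 ≤ A *ᵥ v) : 0 ≤ v := by
  rw [← negPart_eq_zero]
  by_contra hne
  have hquad := hpos.dotProduct_mulVec_pos hne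
  rw [star_trivial] at hquad
  have hcross := hA.dotProduct_mulVec_nonpos (negPart_nonneg v) (posPart_nonneg v)
    fun i => (mul_comm _ _).trans (posPart_mul_negPart_eq_zero (v i))
  have hAv : 0 ≤ v⁻ ⬝ᵥ A *ᵥ (v⁺ - v⁻) := by
    rw [posPart_sub_negPart]
    exact dotProduct_nonneg_of_nonneg (negPart_nonneg v) hv
  rw [mulVec_sub, dotProduct_sub] at hAv
  linarith

theorem pos_of_mulVec_pos (hA : A.IsZMatrix) (hpos : A.PosDef) {v : m → ℝ}
    (hv : ∀ i, 0 < (A *ᵥ v) i) (i : m) : 0 < v i := by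
  have hv0 := hA.nonneg_of_mulVec_nonneg hpos fun i => (hv i).le
  refine (hv0 i).lt_of_ne fun hi => ?_
  exact (hv i).not_ge (hA.mulVec_apply_nonpos hv0 hi.symm)

theorem mulVec_abs_eq_zero (hA : A.IsZMatrix) (hpsd : A.PosSemidef) {x : m → ℝ}
    (hx : A *ᵥ x = 0) : A *ᵥ |x| = 0 := by
  rw [← hpsd.dotProduct_mulVec_zero_iff, star_trivial]
  refine le_antisymm ?_ (by simpa using hpsd.dotProduct_mulVec_nonneg |x|)
  simpa [hx] using hA.abs_dotProduct_mulVec_abs_le x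

theorem exists_pos_mulVec_nonneg_of_submatrix (hA : A.IsZMatrix) (hsym : A.IsSymm)
    {b : m → ℝ} (hb : 0 ≤ b) (hAb : A *ᵥ b = 0) {d' : {i // b i = 0} → ℝ}
    (hd' : ∀ i, 0 < d' i) (hAd' : 0 ≤ A.submatrix (Subtype.val : {i // b i = 0} → m) (↑) *ᵥ d') :
    ∃ d : m → ℝ, (∀ i, 0 < d i) ∧ 0 ≤ A *ᵥ d := by
  let e : m → ℝ := fun i => if h : b i = 0 then d' ⟨i, h⟩ else 0
  have hAe : ∀ i, (A *ᵥ e) i = ∑ j : {j // b j = 0}, A i j * d' j := by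
    intro i
    have hS : ∀ j : {j // b j = 0}, A i j * e j = A i j * d' j := fun j => by simp [e, j.2]
    have hSc : ∀ j : {j // b j ≠ 0}, A i j * e j = 0 := fun j => by simp [e, j.2]
    rw [mulVec, dotProduct,
      ← Fintype.sum_subtype_add_sum_subtype (fun j => b j = 0) (fun j => A i j * e j)]
    simp only [hS, hSc, sum_const_zero, add_zero]
  refine ⟨b + e, fun i => ?_, fun i => ?_⟩
  · by_cases hi : b i = 0
    · simpa [e, hi] using hd' ⟨i, hi⟩
    · simpa [e, hi] using (hb i).lt_of_ne' hi
  · rw [mulVec_add, hAb, zero_add, Pi.zero_apply, hAe]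
    by_cases hi : b i = 0
    · exact hAd' ⟨i, hi⟩
    · have hbi : 0 < b i := (hb i).lt_of_ne' hi
      refine (sum_eq_zero fun j _ => ?_).ge
      rw [← hsym.apply, hA.apply_eq_zero_of_mulVec_apply_eq_zero hb (congrFun hAb j) j.2 hbi,
        zero_mul]

theorem exists_pos_mulVec_nonneg (hA : A.IsZMatrix) (hsym : A.IsSymm) (hpsd : A.PosSemidef) :
    ∃ d : m → ℝ, (∀ i, 0 < d i) ∧ 0 ≤ A *ᵥ d := by
  classical
  induction hcard : Fintype.card m using Nat.strong_induction_on generalizing m with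
  | _ N ih =>
  by_cases hdet : A.det = 0
  · obtain ⟨x, hx, hAx⟩ := exists_mulVec_eq_zero_iff.mpr hdet
    obtain ⟨i₀, hi₀⟩ := Function.ne_iff.mp hx
    have hlt : Fintype.card {i // |x| i = 0} < N :=
      hcard ▸ Fintype.card_subtype_lt (x := i₀) (by simpa using hi₀)
    obtain ⟨d', hd', hAd'⟩ := ih _ hlt (hA.submatrix Subtype.val_injective)
      (hsym.submatrix _) (hpsd.submatrix _) rfl
    exact hA.exists_pos_mulVec_nonneg_of_submatrix hsym (abs_nonneg x)
      (hA.mulVec_abs_eq_zero hpsd hAx) hd' hAd'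
  · have hunit : IsUnit A := (isUnit_iff_isUnit_det A).mpr (Ne.isUnit hdet)
    obtain ⟨d, hAd⟩ := mulVec_surjective_iff_isUnit.mpr hunit 1
    have hpos : A.PosDef := hpsd.posDef_iff_isUnit.mpr hunit
    exact ⟨d, hA.pos_of_mulVec_pos hpos (by simp [hAd]), by simp [hAd]⟩

end IsZMatrix

end Matrix

theorem symm_Z_matrix_posSemidef_iff
    {n : ℕ} (A : Matrix (Fin n) (Fin n) ℝ) (hsym : A.IsSymm)
    (hZ : ∀ i j : Fin n, i ≠ j → A i j ≤ 0) :
    A.PosSemidef ↔ ∃ d : Fin n → ℝ, (∀ i, 0 < d i) ∧ ∀ i, 0 ≤ A.mulVec d i := by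
  have hA : A.IsZMatrix := hZ
  exact ⟨hA.exists_pos_mulVec_nonneg hsym,
    fun ⟨_, hd, hAd⟩ => hA.posSemidef_of_mulVec_nonneg hsym hd hAd⟩
end

section
/- Let M be an n×n symmetric real matrix whose comparison matrix M̄ is positive semidefinite. Then M itself is positive semidefinite. -/
open Matrix

/-- The comparison matrix of a square matrix. -/
def comparisonMatrix {n : Type*} [DecidableEq n] (M : Matrix n n ℝ) : Matrix n n ℝ :=
  fun i j => if i = j then M i i else -|M i j|

section

variable {n : Type*} [DecidableEq n]

theorem abs_mul_comparisonMatrix_mul_abs_le (M : Matrix n n ℝ) (x : n → ℝ) (i j : n) :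
    |x i| * (comparisonMatrix M i j * |x j|) ≤ x i * (M i j * x j) := by
  by_cases hij : i = j
  · subst hij
    simp only [comparisonMatrix, if_true]
    linear_combination M i i * abs_mul_abs_self (x i)
  · simp only [comparisonMatrix, if_neg hij, neg_mul, mul_neg, ← abs_mul]
    exact neg_abs_le _

theorem abs_dotProduct_comparisonMatrix_mulVec_abs_le [Fintype n] (M : Matrix n n ℝ)
    (x : n → ℝ) : |x| ⬝ᵥ comparisonMatrix M *ᵥ |x| ≤ x ⬝ᵥ M *ᵥ x := by
  simp only [dotProduct, mulVec, Finset.mul_sum, Pi.abs_apply]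
  exact Finset.sum_le_sum fun i _ => Finset.sum_le_sum fun j _ =>
    abs_mul_comparisonMatrix_mul_abs_le M x i j

end

theorem posSemidef_of_comparison_posSemidef
    {n : ℕ} (M : Matrix (Fin n) (Fin n) ℝ) (hsym : M.IsSymm)
    (hcmp : (comparisonMatrix M).PosSemidef) :
    M.PosSemidef := by
  rw [posSemidef_iff_dotProduct_mulVec]
  refine ⟨by rwa [IsHermitian, conjTranspose_eq_transpose_of_trivial], fun x => ?_⟩
  simpa using (hcmp.dotProduct_mulVec_nonneg |x|).trans
    (abs_dotProduct_comparisonMatrix_mulVec_abs_le M x)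
end

section
/- Let M be an n×n symmetric real matrix whose comparison matrix M̄ is positive semidefinite, and let i be an index with m_{ii} > 0. Then the comparison matrix of the Schur complement (M/m_{ii}) is positive semidefinite. -/
open Matrix

/-!
The Schur complement `A / a_ii` of a positive semidefinite `A` is `Eᴴ A E`, where `E` performs the
Gaussian elimination step at the pivot `(i, i)`; hence the Schur complement of `comparisonMatrix M`
is positive semidefinite. Entrywise it lies below `comparisonMatrix (M / m_ii)`, by
`|m_jk - m_ji m_ik / m_ii| ≤ |m_jk| + |m_ji| |m_ik| / m_ii` off the diagonal and
`m_ji m_ij ≤ |m_ji| |m_ij|` on it. A matrix `C` with nonpositive off-diagonal entries satisfies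
`|x|ᵀ C |x| ≤ xᵀ C x`, so `xᵀ C x ≥ |x|ᵀ P |x| ≥ 0` whenever `P ≤ C` entrywise with `P`
positive semidefinite.
-/

namespace Matrix

variable {n : Type*}

/-- For `A i i = 0` the division by zero makes this the principal submatrix away from `i`. -/
noncomputable def entrySchurComplement (A : Matrix n n ℝ) (i : n) :
    Matrix {j // j ≠ i} {j // j ≠ i} ℝ :=
  of fun j k => A j k - A j i * A i k / A i i

@[simp]
theorem entrySchurComplement_apply (A : Matrix n n ℝ) (i : n) (j k : {j // j ≠ i}) :
    A.entrySchurComplement i j k = A j k - A j i * A i k / A i i := rfl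

theorem IsSymm.entrySchurComplement {A : Matrix n n ℝ} (hA : A.IsSymm) (i : n) :
    (A.entrySchurComplement i).IsSymm := by
  ext j k
  simp only [transpose_apply, entrySchurComplement_apply, hA.apply]
  ring

section Fintype

variable [Fintype n]

theorem dotProduct_mulVec_abs_le {C : Matrix n n ℝ} (hC : ∀ j k, j ≠ k → C j k ≤ 0)
    (x : n → ℝ) : |x| ⬝ᵥ (C *ᵥ |x|) ≤ x ⬝ᵥ (C *ᵥ x) := by
  simp only [dotProduct, mulVec, Finset.mul_sum, Pi.abs_apply]
  refine Finset.sum_le_sum fun j _ => Finset.sum_le_sum fun k _ => ?_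
  rcases eq_or_ne j k with rfl | hjk
  · rw [← mul_assoc, mul_right_comm, abs_mul_abs_self, mul_right_comm, mul_assoc]
  · have hCjk := hC j k hjk
    have hx := abs_mul (x j) (x k) ▸ le_abs_self (x j * x k)
    nlinarith

theorem dotProduct_mulVec_mono {P C : Matrix n n ℝ} (h : ∀ j k, P j k ≤ C j k) {u : n → ℝ}
    (hu : 0 ≤ u) : u ⬝ᵥ (P *ᵥ u) ≤ u ⬝ᵥ (C *ᵥ u) := by
  simp only [dotProduct, mulVec, Finset.mul_sum]
  gcongr with j _ k _
  · exact hu j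
  · exact hu k
  · exact h j k

theorem PosSemidef.of_le_of_nonpos_offDiag {P C : Matrix n n ℝ} (hP : P.PosSemidef)
    (hC : C.IsSymm) (hle : ∀ j k, P j k ≤ C j k) (hoff : ∀ j k, j ≠ k → C j k ≤ 0) :
    C.PosSemidef := by
  refine .of_dotProduct_mulVec_nonneg (isHermitian_iff_isSymm.mpr hC) fun x => ?_
  calc 0 ≤ |x| ⬝ᵥ (P *ᵥ |x|) := by simpa using hP.dotProduct_mulVec_nonneg |x|
    _ ≤ |x| ⬝ᵥ (C *ᵥ |x|) := dotProduct_mulVec_mono hle (abs_nonneg x)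
    _ ≤ star x ⬝ᵥ (C *ᵥ x) := dotProduct_mulVec_abs_le hoff x

end Fintype

section DecidableEq

variable [DecidableEq n]

/-- Column `j` is `e_j - (A i j / A i i) • e_i`. -/
noncomputable def pivotElimination (A : Matrix n n ℝ) (i : n) : Matrix n {j // j ≠ i} ℝ :=
  of fun a j => (if a = j then 1 else 0) - if a = i then A i j / A i i else 0

theorem entrySchurComplement_eq_conjTranspose_mul_mul [Fintype n] (A : Matrix n n ℝ) (i : n) :
    A.entrySchurComplement i = (A.pivotElimination i)ᴴ * A * A.pivotElimination i := by
  ext j k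
  simp [pivotElimination, mul_apply, sub_mul, mul_sub, Finset.sum_sub_distrib,
    Finset.sum_ite_eq', ite_mul, mul_ite]
  rcases eq_or_ne (A i i) 0 with hd | hd
  · simp [hd]
  · field_simp
    ring

theorem PosSemidef.entrySchurComplement [Fintype n] {A : Matrix n n ℝ} (hA : A.PosSemidef)
    (i : n) : (A.entrySchurComplement i).PosSemidef := by
  rw [entrySchurComplement_eq_conjTranspose_mul_mul]
  exact hA.conjTranspose_mul_mul_same _

theorem comparisonMatrix_apply_self (M : Matrix n n ℝ) (j : n) :
    comparisonMatrix M j j = M j j := if_pos rfl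

theorem comparisonMatrix_apply_of_ne (M : Matrix n n ℝ) {j k : n} (h : j ≠ k) :
    comparisonMatrix M j k = -|M j k| := if_neg h

theorem comparisonMatrix_nonpos_of_ne (M : Matrix n n ℝ) {j k : n} (h : j ≠ k) :
    comparisonMatrix M j k ≤ 0 := by
  simp [comparisonMatrix_apply_of_ne M h]

theorem IsSymm.comparisonMatrix {M : Matrix n n ℝ} (hM : M.IsSymm) :
    (comparisonMatrix M).IsSymm := by
  ext j k
  rcases eq_or_ne j k with rfl | hjk
  · rfl
  · rw [transpose_apply, comparisonMatrix_apply_of_ne M hjk,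
      comparisonMatrix_apply_of_ne M hjk.symm, hM.apply]

theorem comparisonMatrix_entrySchurComplement_le {M : Matrix n n ℝ} {i : n} (hi : 0 ≤ M i i)
    (j k : {j // j ≠ i}) :
    (comparisonMatrix M).entrySchurComplement i j k
      ≤ comparisonMatrix (M.entrySchurComplement i) j k := by
  have hC : (comparisonMatrix M).entrySchurComplement i j k
      = comparisonMatrix M j k - |M j i| * |M i k| / M i i := by
    simp only [entrySchurComplement_apply, comparisonMatrix_apply_self,
      comparisonMatrix_apply_of_ne M j.2, comparisonMatrix_apply_of_ne M (Ne.symm k.2),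
      neg_mul_neg]
  rw [hC]
  rcases eq_or_ne j k with rfl | hjk
  · rw [comparisonMatrix_apply_self, comparisonMatrix_apply_self, entrySchurComplement_apply]
    exact sub_le_sub_left
      (div_le_div_of_nonneg_right (abs_mul (M j i) (M i j) ▸ le_abs_self _) hi) _
  · have habs : |M j i * M i k / M i i| = |M j i| * |M i k| / M i i := by
      rw [abs_div, abs_mul, abs_of_nonneg hi]
    rw [comparisonMatrix_apply_of_ne _ hjk,
      comparisonMatrix_apply_of_ne M (Subtype.coe_ne_coe.mpr hjk), entrySchurComplement_apply,
      ← habs]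
    linarith [abs_sub (M j k) (M j i * M i k / M i i)]

end DecidableEq

end Matrix

theorem comparison_schur_posSemidef_general
    {n : ℕ} (M : Matrix (Fin n) (Fin n) ℝ) (hsym : M.IsSymm)
    (hcmp : (comparisonMatrix M).PosSemidef)
    (i : Fin n)
    (S : Matrix {j : Fin n // j ≠ i} {j : Fin n // j ≠ i} ℝ)
    (hS : ∀ j k : {j : Fin n // j ≠ i},
        S j k = M j k - M (j : Fin n) i * M i (k : Fin n) / M i i) :
    (comparisonMatrix S).PosSemidef := by
  obtain rfl : S = M.entrySchurComplement i := ext hS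
  have hi : 0 ≤ M i i := comparisonMatrix_apply_self M i ▸ hcmp.diag_nonneg
  exact (hcmp.entrySchurComplement i).of_le_of_nonpos_offDiag
    (hsym.entrySchurComplement i).comparisonMatrix (comparisonMatrix_entrySchurComplement_le hi)
    fun _ _ => comparisonMatrix_nonpos_of_ne _

theorem comparison_schur_posSemidef
    {n : ℕ} (M : Matrix (Fin n) (Fin n) ℝ) (hsym : M.IsSymm)
    (hcmp : (comparisonMatrix M).PosSemidef)
    (i : Fin n) (hpos : 0 < M i i)
    (S : Matrix {j : Fin n // j ≠ i} {j : Fin n // j ≠ i} ℝ)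
    (hS : ∀ j k : {j : Fin n // j ≠ i},
        S j k = M j k - M (j : Fin n) i * M i (k : Fin n) / M i i) :
    (comparisonMatrix S).PosSemidef :=
  comparison_schur_posSemidef_general M hsym hcmp i S hS
end

section
/- Let M be an n×n symmetric positive definite matrix such that its comparison matrix M̄ is positive semidefinite, let d > 0 satisfy M̄ d ≥ 0, and set p := (1/2)(M + M̄)d. Then for every nonempty index set α ⊆ [n], the vector M_{αα}^{-1} p_α is nonnegative. -/
/-!
With `A = M_αα`, `e = d_α` and `x = A⁻¹ p_α`, the vector `z = 2x - e` satisfies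
`A z = (M̄ d)_α + M_{α,αᶜ} d_αᶜ`, so `|A z| ≤ (M̄ d)_α + |M_{α,αᶜ}| d_αᶜ = Ā e`
componentwise, where `Ā` is the comparison matrix of `A`. A maximum principle for positive
definite `A` turns this into `|z| ≤ e`, i.e. `x ≥ 0`: if `t = max |z_i| / e_i` exceeded `1`,
every row attaining it would make `|A z| ≤ Ā e` tight, so `A` would annihilate the restriction
of `z` to those rows.
-/

open Matrix

open Finset

lemma comparisonMatrix_submatrix {ι κ : Type*} [DecidableEq ι] [DecidableEq κ]
    (A : Matrix ι ι ℝ) {f : κ → ι} (hf : Function.Injective f) :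
    comparisonMatrix (A.submatrix f f) = (comparisonMatrix A).submatrix f f := by
  ext i j
  simp [comparisonMatrix, hf.eq_iff]

lemma Matrix.PosDef.eq_zero_of_mulVec_eq_zero_on_support {ι : Type*} [Fintype ι]
    {A : Matrix ι ι ℝ} (hA : A.PosDef) {ζ : ι → ℝ} (h : ∀ i, ζ i ≠ 0 → (A *ᵥ ζ) i = 0) :
    ζ = 0 := by
  by_contra hζ
  have hq : ζ ⬝ᵥ (A *ᵥ ζ) = 0 := sum_eq_zero fun i _ => by
    by_cases hi : ζ i = 0 <;> simp [hi, h]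
  simpa [hq] using hA.dotProduct_mulVec_pos hζ

section Comparison

variable {ι : Type*} [Fintype ι] [DecidableEq ι]

lemma comparisonMatrix_mulVec_apply (A : Matrix ι ι ℝ) (e : ι → ℝ) (k : ι) :
    (comparisonMatrix A *ᵥ e) k = A k k * e k - ∑ j ∈ univ.erase k, |A k j| * e j := by
  rw [mulVec, dotProduct, ← add_sum_erase _ _ (mem_univ k), sub_eq_add_neg, ← sum_neg_distrib]
  congr 1
  · simp [comparisonMatrix]
  · refine sum_congr rfl fun j hj => ?_
    simp [comparisonMatrix, (ne_of_mem_erase hj).symm]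

lemma mulVec_apply_eq_submatrix_mulVec_add {R : Type*} [NonUnitalNonAssocSemiring R]
    (A : Matrix ι ι R) (v : ι → R) (α : Finset ι) (b : {x // x ∈ α}) :
    (A *ᵥ v) b = (A.submatrix Subtype.val Subtype.val *ᵥ fun c : {x // x ∈ α} => v c) b
      + ∑ j ∈ αᶜ, A b j * v j := by
  simp only [mulVec, dotProduct, submatrix_apply]
  rw [sum_coe_sort α fun j => A b j * v j, sum_add_sum_compl]

lemma comparisonMatrix_mulVec_apply_eq_submatrix_sub (A : Matrix ι ι ℝ) (v : ι → ℝ)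
    (α : Finset ι) (b : {x // x ∈ α}) :
    (comparisonMatrix A *ᵥ v) b =
      (comparisonMatrix (A.submatrix Subtype.val Subtype.val) *ᵥ fun c : {x // x ∈ α} => v c) b
      - ∑ j ∈ αᶜ, |A b j| * v j := by
  rw [mulVec_apply_eq_submatrix_mulVec_add, comparisonMatrix_submatrix _ Subtype.val_injective,
    sub_eq_add_neg, ← sum_neg_distrib]
  congr 1
  refine sum_congr rfl fun j hj => ?_
  have hbj : (b : ι) ≠ j := fun h => mem_compl.1 hj (h ▸ b.2)
  simp [comparisonMatrix, hbj]

/-- At a row where `|z k| / e k` attains its maximum `t > 1`, both inequalities in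
`|A_kk z_k| ≤ |(A z)_k| + ∑_{j ≠ k} |A_kj| |z_j| ≤ (Ā e)_k + t ∑_{j ≠ k} |A_kj| e_j`
are equalities. -/
lemma mulVec_apply_eq_zero_of_abs_le_comparisonMatrix_mulVec {A : Matrix ι ι ℝ}
    {e z : ι → ℝ} {t : ℝ} {k : ι} (hkk : 0 < A k k) (ht : 1 < t) (hz : ∀ j, |z j| ≤ t * e j)
    (hk : |z k| = t * e k) (h : |(A *ᵥ z) k| ≤ (comparisonMatrix A *ᵥ e) k) :
    (A *ᵥ z) k = 0 ∧ ∀ j ≠ k, A k j ≠ 0 → |z j| = t * e j := by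
  rw [comparisonMatrix_mulVec_apply] at h
  set s := univ.erase k
  set R := ∑ j ∈ s, |A k j| * (t * e j - |z j|)
  have hR : 0 ≤ R := sum_nonneg fun j _ => mul_nonneg (abs_nonneg _) (sub_nonneg.2 (hz j))
  have hrow : A k k * (t * e k) ≤ |(A *ᵥ z) k| + t * ∑ j ∈ s, |A k j| * e j - R :=
    calc A k k * (t * e k) = |(A *ᵥ z) k - ∑ j ∈ s, A k j * z j| := by
          rw [← hk, ← abs_of_pos hkk, ← abs_mul, mulVec, dotProduct,
            ← add_sum_erase _ _ (mem_univ k), add_sub_cancel_right]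
      _ ≤ |(A *ᵥ z) k| + ∑ j ∈ s, |A k j| * |z j| := by
          refine (abs_sub _ _).trans (add_le_add le_rfl ((abs_sum_le_sum_abs _ _).trans_eq ?_))
          simp only [abs_mul]
      _ = |(A *ᵥ z) k| + t * ∑ j ∈ s, |A k j| * e j - R := by
          simp only [R, mul_sub, sum_sub_distrib, mul_sum]
          ring_nf
  have hdiag : 0 ≤ A k k * e k - ∑ j ∈ s, |A k j| * e j := (abs_nonneg _).trans h
  have hslack : (t - 1) * (A k k * e k - ∑ j ∈ s, |A k j| * e j) + R ≤ 0 := by linarith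
  have hR0 : R = 0 := le_antisymm (by nlinarith) hR
  refine ⟨abs_nonpos_iff.1 (h.trans (by nlinarith)), fun j hj hAkj => ?_⟩
  have := (sum_eq_zero_iff_of_nonneg fun j _ => mul_nonneg (abs_nonneg (A k j))
    (sub_nonneg.2 (hz j))).1 hR0 j (mem_erase.2 ⟨hj, mem_univ j⟩)
  rcases mul_eq_zero.1 this with h0 | h0
  · exact absurd (abs_eq_zero.1 h0) hAkj
  · linarith

lemma abs_le_of_abs_mulVec_le_comparisonMatrix_mulVec {A : Matrix ι ι ℝ} (hA : A.PosDef)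
    {e z : ι → ℝ} (he : ∀ i, 0 < e i) (h : ∀ i, |(A *ᵥ z) i| ≤ (comparisonMatrix A *ᵥ e) i)
    (i : ι) : |z i| ≤ e i := by
  by_contra! hi
  obtain ⟨k, -, hk⟩ := exists_max_image univ (fun j => |z j| / e j) ⟨i, mem_univ i⟩
  set t := |z k| / e k
  have hz : ∀ j, |z j| ≤ t * e j := fun j => (div_le_iff₀ (he j)).1 (hk j (mem_univ j))
  have ht : 1 < t := ((one_lt_div (he i)).2 hi).trans_le (hk i (mem_univ i))
  have htk : |z k| = t * e k := (div_mul_cancel₀ _ (he k).ne').symm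
  have tight := fun j (hj : |z j| = t * e j) =>
    mulVec_apply_eq_zero_of_abs_le_comparisonMatrix_mulVec hA.diag_pos ht hz hj (h j)
  set ζ : ι → ℝ := fun j => if |z j| = t * e j then z j else 0
  have hζ : ζ = 0 := hA.eq_zero_of_mulVec_eq_zero_on_support fun j hj => by
    have hjt : |z j| = t * e j := by
      by_contra hn
      simp [ζ, hn] at hj
    rw [← (tight j hjt).1]
    refine sum_congr rfl fun l _ => ?_
    by_cases hl : |z l| = t * e l
    · simp [ζ, hl]
    · have hAjl : A j l = 0 := by
        by_contra hA0
        exact hl ((tight j hjt).2 l (by rintro rfl; exact hl hjt) hA0)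
      simp [ζ, hl, hAjl]
  have hzk : z k ≠ 0 := by
    intro h0
    rw [h0, abs_zero] at htk
    nlinarith [he k]
  exact hzk (by simpa [ζ, htk] using congrFun hζ k)

lemma inv_mulVec_nonneg_of_abs_two_mul_sub_le {A : Matrix ι ι ℝ} (hA : A.PosDef)
    {e q : ι → ℝ} (he : ∀ i, 0 < e i)
    (hq : ∀ i, |2 * q i - (A *ᵥ e) i| ≤ (comparisonMatrix A *ᵥ e) i)
    (i : ι) : 0 ≤ (A⁻¹ *ᵥ q) i := by
  have hAx : A *ᵥ (A⁻¹ *ᵥ q) = q := by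
    rw [mulVec_mulVec, mul_nonsing_inv _ hA.det_pos.ne'.isUnit, one_mulVec]
  have hAz : A *ᵥ ((2 : ℝ) • (A⁻¹ *ᵥ q) - e) = (2 : ℝ) • q - A *ᵥ e := by
    rw [mulVec_sub, mulVec_smul, hAx]
  have hz := abs_le_of_abs_mulVec_le_comparisonMatrix_mulVec hA he
    (z := (2 : ℝ) • (A⁻¹ *ᵥ q) - e) (fun j => by simpa [hAz] using hq j) i
  have := (abs_le.1 hz).1
  simp only [Pi.sub_apply, Pi.smul_apply, smul_eq_mul] at this
  linarith

lemma abs_mulVec_add_comparisonMatrix_mulVec_sub_submatrix_le {M : Matrix ι ι ℝ}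
    {d : ι → ℝ} (hd : ∀ i, 0 < d i) (hMd : ∀ i, 0 ≤ (comparisonMatrix M *ᵥ d) i)
    (α : Finset ι) (b : {x // x ∈ α}) :
    |(M *ᵥ d) b + (comparisonMatrix M *ᵥ d) b
        - (M.submatrix Subtype.val Subtype.val *ᵥ fun c : {x // x ∈ α} => d c) b|
      ≤ (comparisonMatrix (M.submatrix Subtype.val Subtype.val) *ᵥ
          fun c : {x // x ∈ α} => d c) b := by
  have hsplit := mulVec_apply_eq_submatrix_mulVec_add M d α b
  have hsplitBar := comparisonMatrix_mulVec_apply_eq_submatrix_sub M d α b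
  have hout : |∑ j ∈ αᶜ, M b j * d j| ≤ ∑ j ∈ αᶜ, |M b j| * d j :=
    (abs_sum_le_sum_abs _ _).trans_eq
      (sum_congr rfl fun j _ => by rw [abs_mul, abs_of_pos (hd j)])
  rw [abs_le] at hout ⊢
  constructor <;> linarith [hMd b]

end Comparison

theorem inv_submatrix_p_nonneg_general
    {n : ℕ} (M : Matrix (Fin n) (Fin n) ℝ) (hpd : M.PosDef)
    (d : Fin n → ℝ) (hd : ∀ i, 0 < d i)
    (hMd : ∀ i, 0 ≤ (comparisonMatrix M).mulVec d i)
    (p : Fin n → ℝ)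
    (hp : p = fun i => (1 / 2) * (M.mulVec d i + (comparisonMatrix M).mulVec d i))
    (α : Finset (Fin n)) :
    ∀ a : {x // x ∈ α},
      0 ≤ ((M.submatrix (Subtype.val : {x // x ∈ α} → Fin n)
            (Subtype.val : {x // x ∈ α} → Fin n))⁻¹).mulVec
          (fun b : {x // x ∈ α} => p (b : Fin n)) a := by
  subst hp
  refine inv_mulVec_nonneg_of_abs_two_mul_sub_le (hpd.submatrix Subtype.val_injective)
    (fun b => hd b) fun b => ?_
  convert abs_mulVec_add_comparisonMatrix_mulVec_sub_submatrix_le hd hMd α b using 3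
  ring

theorem inv_submatrix_p_nonneg
    {n : ℕ} (M : Matrix (Fin n) (Fin n) ℝ) (hpd : M.PosDef)
    (hcmp : (comparisonMatrix M).PosSemidef)
    (d : Fin n → ℝ) (hd : ∀ i, 0 < d i)
    (hMd : ∀ i, 0 ≤ (comparisonMatrix M).mulVec d i)
    (p : Fin n → ℝ)
    (hp : p = fun i => (1 / 2) * (M.mulVec d i + (comparisonMatrix M).mulVec d i))
    (α : Finset (Fin n)) (hα : α.Nonempty) :
    ∀ a : {x // x ∈ α},
      0 ≤ ((M.submatrix (Subtype.val : {x // x ∈ α} → Fin n)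
            (Subtype.val : {x // x ∈ α} → Fin n))⁻¹).mulVec
          (fun b : {x // x ∈ α} => p (b : Fin n)) a :=
  inv_submatrix_p_nonneg_general M hpd d hd hMd p hp α
end

section
/- Let M be a symmetric tridiagonal n×n matrix that is positive semidefinite. Then its comparison matrix M̄ is positive semidefinite. -/
open Matrix

/-- auxiliary sign sequence -/
noncomputable def compSign {n : ℕ} (M : Matrix (Fin n) (Fin n) ℝ) : ℕ → ℝ
  | 0 => 1
  | k+1 =>
    if 0 ≤ (if h : k < n ∧ k+1 < n then M ⟨k, h.1⟩ ⟨k+1, h.2⟩ else 0)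
    then -(compSign M k) else compSign M k

lemma compSign_sq {n : ℕ} (M : Matrix (Fin n) (Fin n) ℝ) (k : ℕ) :
    compSign M k * compSign M k = 1 := by
  induction k with
  | zero => norm_num [compSign]
  | succ k ih =>
    rw [compSign]
    by_cases h0 : 0 ≤ (if h : k < n ∧ k+1 < n then M ⟨k, h.1⟩ ⟨k+1, h.2⟩ else 0)
    · rw [if_pos h0]; simpa using ih
    · rw [if_neg h0]; exact ih

lemma compSign_key {n : ℕ} (M : Matrix (Fin n) (Fin n) ℝ) (i j : Fin n)
    (hj : (j : ℕ) = (i : ℕ) + 1) :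
    compSign M i * compSign M j * M i j = -|M i j| := by
  have hi : (i : ℕ) < n := i.isLt
  have hj2 : (i : ℕ) + 1 < n := hj ▸ j.isLt
  have h : (if h : (i:ℕ) < n ∧ (i:ℕ)+1 < n then M ⟨i, h.1⟩ ⟨(i:ℕ)+1, h.2⟩ else 0) = M i j := by
    rw [dif_pos ⟨hi, hj2⟩]
    have e1 : (⟨(i:ℕ), hi⟩ : Fin n) = i := Fin.ext rfl
    have e2 : (⟨(i:ℕ)+1, hj2⟩ : Fin n) = j := Fin.ext hj.symm
    rw [e1, e2]
  have hjj : compSign M (j : ℕ) = compSign M ((i:ℕ)+1) := by rw [hj]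
  rw [hjj, compSign, h]
  by_cases h0 : 0 ≤ M i j
  · rw [if_pos h0, abs_of_nonneg h0]
    linear_combination (-(M i j)) * compSign_sq M (i : ℕ)
  · rw [if_neg h0, abs_of_neg (not_le.mp h0)]
    linear_combination (M i j) * compSign_sq M (i : ℕ)

theorem tridiagonal_comparison_posSemidef
    {n : ℕ} (M : Matrix (Fin n) (Fin n) ℝ) (hsym : M.IsSymm)
    (htri : ∀ i j : Fin n, (i : ℕ) + 2 ≤ (j : ℕ) ∨ (j : ℕ) + 2 ≤ (i : ℕ) → M i j = 0)
    (hpsd : M.PosSemidef) :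
    (comparisonMatrix M).PosSemidef := by
  set s : Fin n → ℝ := fun i => compSign M (i : ℕ) with hs
  have hD : comparisonMatrix M = (diagonal s)ᴴ * M * diagonal s := by
    have hct : (diagonal s)ᴴ = diagonal s := by
      simp
    rw [hct]
    ext i j
    rw [Matrix.mul_diagonal, Matrix.diagonal_mul]
    show comparisonMatrix M i j = s i * M i j * s j
    simp only [hs]
    rcases lt_trichotomy (i : ℕ) (j : ℕ) with h | h | h
    · have hne : i ≠ j := fun e => by simp [e] at h
      rw [show comparisonMatrix M i j = -|M i j| from if_neg hne]
      rcases Nat.lt_or_ge ((i:ℕ)+1) (j:ℕ) with h2 | h2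
      · have : M i j = 0 := htri i j (Or.inl h2)
        simp [this]
      · have hj : (j : ℕ) = (i : ℕ) + 1 := le_antisymm h2 h
        linear_combination (-1 : ℝ) * compSign_key M i j hj
    · have he : i = j := Fin.ext h
      subst he
      rw [show comparisonMatrix M i i = M i i from if_pos rfl]
      linear_combination (-(M i i)) * compSign_sq M (i : ℕ)
    · have hne : i ≠ j := fun e => by simp [e] at h
      rw [show comparisonMatrix M i j = -|M i j| from if_neg hne]
      have hsymm : M i j = M j i := by
        conv_lhs => rw [← hsym]
        rfl
      rcases Nat.lt_or_ge ((j:ℕ)+1) (i:ℕ) with h2 | h2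
      · have : M i j = 0 := htri i j (Or.inr h2)
        simp [this]
      · have hi : (i : ℕ) = (j : ℕ) + 1 := le_antisymm h2 h
        rw [hsymm]
        linear_combination (-1 : ℝ) * compSign_key M j i hi
  rw [hD]
  exact hpsd.conjTranspose_mul_mul_same (diagonal s)
end

section
/- Let A be an n×n symmetric irreducible matrix whose comparison matrix Ā is positive semidefinite, and let d > 0 satisfy Ā d ≥ 0. If Ā d ≠ 0 (i.e., Ā d has at least one positive component), then Ā is positive definite. -/
open Matrix

/-- A matrix is irreducible iff any two distinct indices are connected by a chain
of nonzero entries. -/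
def MatrixIrreducible {n : Type*} (A : Matrix n n ℝ) : Prop :=
  ∀ i j : n, i ≠ j → Relation.TransGen (fun a b => A a b ≠ 0) i j

/-! The comparison matrix of an irreducible `A` is an irreducible Z-matrix. For such a
matrix `B` a nonnegative vector `z` with `B z ≥ 0` vanishing at one index vanishes at all its
neighbours, hence everywhere (a discrete minimum principle). If `B x = 0` with `x ≠ 0`, we may
assume `x` has a positive entry; with `c = maxⱼ xⱼ / dⱼ` the vector `z = c d - x` is such a vector,
so `x = c d` and `B d = 0`. Thus `B` is nonsingular, and a nonsingular positive semidefinite matrix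
is positive definite. -/

section ZMatrix

variable {ι : Type*} [Fintype ι] {B : Matrix ι ι ℝ}

theorem eq_zero_of_mulVec_apply_nonneg_of_apply_eq_zero (hZ : ∀ i j, i ≠ j → B i j ≤ 0)
    {z : ι → ℝ} (hz : 0 ≤ z) {i j : ι} (hBz : 0 ≤ (B *ᵥ z) i) (hzi : z i = 0)
    (hBij : B i j ≠ 0) : z j = 0 := by
  have hterm : ∀ k ∈ Finset.univ, B i k * z k ≤ 0 := fun k _ => by
    by_cases hk : i = k
    · simp [← hk, hzi]
    · exact mul_nonpos_of_nonpos_of_nonneg (hZ i k hk) (hz k)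
  have hsum : ∑ k, B i k * z k = 0 := le_antisymm (Finset.sum_nonpos hterm) hBz
  have hij := (Finset.sum_eq_zero_iff_of_nonpos hterm).mp hsum j (Finset.mem_univ j)
  exact (mul_eq_zero.mp hij).resolve_left hBij

theorem MatrixIrreducible.eq_zero_of_nonneg_of_mulVec_nonneg (hB : MatrixIrreducible B)
    (hZ : ∀ i j, i ≠ j → B i j ≤ 0) {z : ι → ℝ} (hz : 0 ≤ z) (hBz : 0 ≤ B *ᵥ z) {i : ι}
    (hzi : z i = 0) : z = 0 := by
  have hreach : ∀ k, Relation.TransGen (fun a b => B a b ≠ 0) i k → z k = 0 := fun k hik => by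
    induction hik with
    | single hBik => exact eq_zero_of_mulVec_apply_nonneg_of_apply_eq_zero hZ hz (hBz i) hzi hBik
    | tail _ hBab ih => exact eq_zero_of_mulVec_apply_nonneg_of_apply_eq_zero hZ hz (hBz _) ih hBab
  funext k
  by_cases hk : i = k
  · rwa [← hk]
  · exact hreach k (hB i k hk)

theorem MatrixIrreducible.mulVec_eq_zero_of_mulVec_eq_zero (hB : MatrixIrreducible B)
    (hZ : ∀ i j, i ≠ j → B i j ≤ 0) {d : ι → ℝ} (hd : ∀ i, 0 < d i) (hBd : 0 ≤ B *ᵥ d)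
    {x : ι → ℝ} (hBx : B *ᵥ x = 0) {j : ι} (hxj : 0 < x j) : B *ᵥ d = 0 := by
  obtain ⟨i, -, hi⟩ :=
    Finset.exists_max_image Finset.univ (fun k => x k / d k) ⟨j, Finset.mem_univ j⟩
  set c := x i / d i
  have hc : 0 < c := (div_pos hxj (hd j)).trans_le (hi j (Finset.mem_univ j))
  have hz : 0 ≤ c • d - x := fun k => by
    simpa [sub_nonneg] using (div_le_iff₀ (hd k)).mp (hi k (Finset.mem_univ k))
  have hBz : B *ᵥ (c • d - x) = c • B *ᵥ d := by
    rw [mulVec_sub, mulVec_smul, hBx, sub_zero]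
  have hzi : (c • d - x) i = 0 := by simp [c, div_mul_cancel₀ _ (hd i).ne']
  have hx : x = c • d := (sub_eq_zero.mp
    (hB.eq_zero_of_nonneg_of_mulVec_nonneg hZ hz (hBz ▸ smul_nonneg hc.le hBd) hzi)).symm
  rw [hx, mulVec_smul] at hBx
  exact (smul_eq_zero.mp hBx).resolve_left hc.ne'

theorem MatrixIrreducible.det_ne_zero_of_mulVec_nonneg [DecidableEq ι] (hB : MatrixIrreducible B)
    (hZ : ∀ i j, i ≠ j → B i j ≤ 0) {d : ι → ℝ} (hd : ∀ i, 0 < d i) (hBd : 0 ≤ B *ᵥ d)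
    (hne : B *ᵥ d ≠ 0) : B.det ≠ 0 := by
  intro hdet
  obtain ⟨x, hx, hBx⟩ := exists_mulVec_eq_zero_iff.mpr hdet
  obtain ⟨j, hxj⟩ := Function.ne_iff.mp hx
  rcases hxj.lt_or_gt with hneg | hpos
  · exact hne <| hB.mulVec_eq_zero_of_mulVec_eq_zero hZ hd hBd
      (by rw [mulVec_neg, hBx, neg_zero]) (neg_pos.mpr hneg : 0 < (-x) j)
  · exact hne <| hB.mulVec_eq_zero_of_mulVec_eq_zero hZ hd hBd hBx hpos

end ZMatrix

section ComparisonMatrix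

variable {ι : Type*} [DecidableEq ι]

theorem comparisonMatrix_apply_nonpos (A : Matrix ι ι ℝ) {i j : ι} (hij : i ≠ j) :
    comparisonMatrix A i j ≤ 0 := by
  simp [comparisonMatrix, hij]

theorem comparisonMatrix_apply_ne_zero_iff (A : Matrix ι ι ℝ) (i j : ι) :
    comparisonMatrix A i j ≠ 0 ↔ A i j ≠ 0 := by
  by_cases hij : i = j <;> simp [comparisonMatrix, hij]

theorem MatrixIrreducible.comparisonMatrix {A : Matrix ι ι ℝ} (hA : MatrixIrreducible A) :
    MatrixIrreducible (comparisonMatrix A) := fun i j hij =>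
  Relation.TransGen.mono (fun a b => (comparisonMatrix_apply_ne_zero_iff A a b).mpr) i j
    (hA i j hij)

end ComparisonMatrix

theorem irreducible_comparison_posDef_of_ne_zero_general
    {n : ℕ} (A : Matrix (Fin n) (Fin n) ℝ)
    (hirr : MatrixIrreducible A)
    (hcmp : (comparisonMatrix A).PosSemidef)
    (d : Fin n → ℝ) (hd : ∀ i, 0 < d i)
    (hAd : ∀ i, 0 ≤ (comparisonMatrix A).mulVec d i)
    (hne : (comparisonMatrix A).mulVec d ≠ 0) :
    (comparisonMatrix A).PosDef :=
  hcmp.posDef_iff_det_ne_zero.mpr <| hirr.comparisonMatrix.det_ne_zero_of_mulVec_nonneg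
    (fun _ _ => comparisonMatrix_apply_nonpos A) hd hAd hne

theorem irreducible_comparison_posDef_of_ne_zero
    {n : ℕ} (A : Matrix (Fin n) (Fin n) ℝ) (hsym : A.IsSymm)
    (hirr : MatrixIrreducible A)
    (hcmp : (comparisonMatrix A).PosSemidef)
    (d : Fin n → ℝ) (hd : ∀ i, 0 < d i)
    (hAd : ∀ i, 0 ≤ (comparisonMatrix A).mulVec d i)
    (hne : (comparisonMatrix A).mulVec d ≠ 0) :
    (comparisonMatrix A).PosDef :=
  irreducible_comparison_posDef_of_ne_zero_general A hirr hcmp d hd hAd hne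
end

section
/- Let A be an n×n symmetric irreducible matrix whose comparison matrix Ā is positive semidefinite. Then the kernel of Ā has dimension at most one; moreover, if the kernel has dimension one, there exists a strictly positive vector f > 0 such that every vector in ker(Ā) is a scalar multiple of f. -/
open Matrix

/-!
Since the off-diagonal entries of `Ā` are `-|aᵢⱼ|`, replacing `x` by `|x|` can only decrease
the quadratic form `xᵀ Ā x`. For `x ∈ ker Ā` this form vanishes, so by semidefiniteness
`|x| ∈ ker Ā` as well. A nonnegative kernel vector vanishing at `i` vanishes at every neighbour
of `i` (row `i` of `Ā |x| = 0` is a sum of nonpositive terms), so by irreducibility a nonzero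
kernel vector has no zero entries. Hence for a kernel vector `f > 0` and any kernel vector `y`,
the kernel vector `y - (y i₀ / f i₀) • f` vanishes at `i₀` and is therefore zero.
-/

namespace comparisonMatrix

variable {ι : Type*} [Fintype ι] [DecidableEq ι] {A : Matrix ι ι ℝ}

theorem abs_dotProduct_mulVec_abs_le (A : Matrix ι ι ℝ) (x : ι → ℝ) :
    |x| ⬝ᵥ comparisonMatrix A *ᵥ |x| ≤ x ⬝ᵥ comparisonMatrix A *ᵥ x := by
  simp only [dotProduct, mulVec, Finset.mul_sum, Pi.abs_apply]
  refine Finset.sum_le_sum fun i _ => Finset.sum_le_sum fun j _ => ?_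
  by_cases hij : i = j
  · subst hij
    rw [mul_left_comm, abs_mul_abs_self, mul_left_comm]
  · have hxx : x i * x j ≤ |x i| * |x j| := (le_abs_self _).trans (abs_mul _ _).le
    simp only [comparisonMatrix, hij, if_false]
    nlinarith [abs_nonneg (A i j)]

theorem mulVec_abs_eq_zero (hA : (comparisonMatrix A).PosSemidef) {x : ι → ℝ}
    (hx : comparisonMatrix A *ᵥ x = 0) : comparisonMatrix A *ᵥ |x| = 0 := by
  have hle : |x| ⬝ᵥ comparisonMatrix A *ᵥ |x| ≤ 0 := by
    simpa [hx] using abs_dotProduct_mulVec_abs_le A x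
  have hge : 0 ≤ |x| ⬝ᵥ comparisonMatrix A *ᵥ |x| := by
    simpa using hA.dotProduct_mulVec_nonneg |x|
  exact (hA.dotProduct_mulVec_zero_iff |x|).mp (by simpa using le_antisymm hle hge)

theorem apply_eq_zero_of_adj {f : ι → ℝ} (hf : comparisonMatrix A *ᵥ f = 0) (hnn : 0 ≤ f)
    {i k : ι} (hi : f i = 0) (hA : A i k ≠ 0) : f k = 0 := by
  by_cases hik : i = k
  · exact hik ▸ hi
  have hterm : ∀ j ∈ Finset.univ, comparisonMatrix A i j * f j ≤ 0 := by
    intro j _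
    by_cases hij : i = j
    · simp [← hij, hi]
    · simp only [comparisonMatrix, hij, if_false]
      exact mul_nonpos_of_nonpos_of_nonneg (neg_nonpos.mpr (abs_nonneg _)) (hnn j)
  have hrow : ∑ j, comparisonMatrix A i j * f j = 0 := by
    simpa [mulVec, dotProduct] using congrFun hf i
  have hk := (Finset.sum_eq_zero_iff_of_nonpos hterm).mp hrow k (Finset.mem_univ k)
  simp only [comparisonMatrix, hik, if_false, neg_mul, neg_eq_zero, mul_eq_zero,
    abs_eq_zero] at hk
  exact hk.resolve_left hA

theorem apply_eq_zero_of_transGen {f : ι → ℝ} (hf : comparisonMatrix A *ᵥ f = 0) (hnn : 0 ≤ f)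
    {i j : ι} (hi : f i = 0) (hij : Relation.TransGen (fun a b => A a b ≠ 0) i j) : f j = 0 := by
  induction hij with
  | single hik => exact apply_eq_zero_of_adj hf hnn hi hik
  | tail _ hkl ih => exact apply_eq_zero_of_adj hf hnn ih hkl

theorem apply_ne_zero_of_mulVec_eq_zero (hirr : MatrixIrreducible A)
    (hA : (comparisonMatrix A).PosSemidef) {x : ι → ℝ} (hx : comparisonMatrix A *ᵥ x = 0)
    (hx0 : x ≠ 0) (i : ι) : x i ≠ 0 := by
  intro hi
  obtain ⟨j, hj⟩ := Function.ne_iff.mp hx0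
  have hij : i ≠ j := by rintro rfl; exact hj hi
  have hzero : |x| j = 0 :=
    apply_eq_zero_of_transGen (mulVec_abs_eq_zero hA hx) (abs_nonneg x) (by simp [hi])
      (hirr i j hij)
  exact hj (by simpa using hzero)

theorem eq_smul_of_mulVec_eq_zero (hirr : MatrixIrreducible A)
    (hA : (comparisonMatrix A).PosSemidef) {f y : ι → ℝ} (hf : comparisonMatrix A *ᵥ f = 0)
    (hfpos : ∀ i, 0 < f i) (hy : comparisonMatrix A *ᵥ y = 0) : ∃ c : ℝ, y = c • f := by
  rcases isEmpty_or_nonempty ι with hι | ⟨⟨i₀⟩⟩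
  · exact ⟨0, Subsingleton.elim _ _⟩
  refine ⟨y i₀ / f i₀, sub_eq_zero.mp ?_⟩
  by_contra hne
  refine apply_ne_zero_of_mulVec_eq_zero hirr hA ?_ hne i₀ ?_
  · simp [mulVec_sub, mulVec_smul, hf, hy]
  · simp [div_mul_cancel₀ _ (hfpos i₀).ne']

end comparisonMatrix

open comparisonMatrix in
theorem kernel_comparison_dim_le_one_general
    {n : ℕ} (A : Matrix (Fin n) (Fin n) ℝ)
    (hirr : MatrixIrreducible A)
    (hcmp : (comparisonMatrix A).PosSemidef) :
    Module.finrank ℝ (LinearMap.ker (comparisonMatrix A).mulVecLin) ≤ 1 ∧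
      (Module.finrank ℝ (LinearMap.ker (comparisonMatrix A).mulVecLin) = 1 →
        ∃ f : Fin n → ℝ, (∀ i, 0 < f i) ∧
          ∀ x : Fin n → ℝ, (comparisonMatrix A).mulVec x = 0 → ∃ c : ℝ, x = c • f) := by
  by_cases hker : LinearMap.ker (comparisonMatrix A).mulVecLin = ⊥
  · rw [hker, finrank_bot]
    simp
  obtain ⟨x, hx, hx0⟩ := (Submodule.ne_bot_iff _).mp hker
  rw [LinearMap.mem_ker, mulVecLin_apply] at hx
  have hfpos : ∀ i, 0 < |x| i := fun i =>
    abs_pos.mpr (apply_ne_zero_of_mulVec_eq_zero hirr hcmp hx hx0 i)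
  have hmul : ∀ y, comparisonMatrix A *ᵥ y = 0 → ∃ c : ℝ, y = c • |x| := fun y hy =>
    eq_smul_of_mulVec_eq_zero hirr hcmp (mulVec_abs_eq_zero hcmp hx) hfpos hy
  have hspan : LinearMap.ker (comparisonMatrix A).mulVecLin ≤ ℝ ∙ |x| := fun y hy => by
    obtain ⟨c, rfl⟩ := hmul y (by simpa using hy)
    exact Submodule.smul_mem _ c (Submodule.mem_span_singleton_self _)
  refine ⟨?_, fun _ => ⟨|x|, hfpos, hmul⟩⟩
  calc Module.finrank ℝ (LinearMap.ker (comparisonMatrix A).mulVecLin)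
      ≤ Module.finrank ℝ (ℝ ∙ |x|) := Submodule.finrank_mono hspan
    _ ≤ 1 := by simpa using finrank_span_le_card ({|x|} : Set (Fin n → ℝ))

theorem kernel_comparison_dim_le_one
    {n : ℕ} (A : Matrix (Fin n) (Fin n) ℝ) (hsym : A.IsSymm)
    (hirr : MatrixIrreducible A)
    (hcmp : (comparisonMatrix A).PosSemidef) :
    Module.finrank ℝ (LinearMap.ker (comparisonMatrix A).mulVecLin) ≤ 1 ∧
      (Module.finrank ℝ (LinearMap.ker (comparisonMatrix A).mulVecLin) = 1 →
        ∃ f : Fin n → ℝ, (∀ i, 0 < f i) ∧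
          ∀ x : Fin n → ℝ, (comparisonMatrix A).mulVec x = 0 → ∃ c : ℝ, x = c • f) :=
  kernel_comparison_dim_le_one_general A hirr hcmp
end

section
/- Let M be a symmetric n×n matrix whose comparison matrix M̄ is positive definite (so M̄ is a Stieltjes matrix). Then M itself is positive definite, and for any d > 0 with M̄ d > 0, the vector p = (1/2)(M + M̄)d is strictly positive and satisfies M_{αα}^{-1} p_α ≥ 0 for every nonempty α ⊆ [n]. -/
open Matrix

/-!
Since `|x|ᵀ M̄ |x| ≤ xᵀ M x`, the matrix `M` and all its principal submatrices `A = M_αα` are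
positive definite. Put `q = A⁻¹ p_α` and let `c` be `q` clipped to the box `[0, d_α]`. Writing
`p = M̄ d + P d` and `p = M d - P d`, with `P` the positive off-diagonal part of `M`, shows that
the residual `p_α - A c` is `≥ 0` where `c` lies on the lower face of the box and `≤ 0` where it
lies on the upper face. As `p_α - A c = A (q - c)` and `q - c` has the opposite sign pattern,
`(q - c)ᵀ A (q - c) ≤ 0`, hence `q = c`.
-/

open Set Function

variable {ι κ : Type*}

theorem Matrix.PosDef.mem_Icc_of_inward_on_faces [Fintype ι] {A : Matrix ι ι ℝ}
    (hA : A.PosDef) {l u q : ι → ℝ} (hlu : l ≤ u)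
    (hlow : ∀ c ∈ Icc l u, ∀ i, c i = l i → (A *ᵥ c) i ≤ (A *ᵥ q) i)
    (hupp : ∀ c ∈ Icc l u, ∀ i, c i = u i → (A *ᵥ q) i ≤ (A *ᵥ c) i) :
    q ∈ Icc l u := by
  set c : ι → ℝ := fun i => max (l i) (min (q i) (u i)) with hc_def
  have hc : c ∈ Icc l u :=
    ⟨fun i => le_max_left _ _, fun i => max_le (hlu i) (min_le_right _ _)⟩
  have hterm : ∀ i, (q - c) i * (A *ᵥ (q - c)) i ≤ 0 := by
    intro i
    rw [mulVec_sub, Pi.sub_apply, Pi.sub_apply]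
    rcases lt_or_ge (q i) (l i) with hql | hlq
    · have hci : c i = l i := max_eq_left ((min_le_left _ _).trans hql.le)
      nlinarith [hlow c hc i hci]
    rcases le_or_gt (q i) (u i) with hqu | huq
    · have hci : c i = q i := by simp [hc_def, hqu, hlq]
      simp [hci]
    · have hci : c i = u i := by simp [hc_def, huq.le, hlu i]
      nlinarith [hupp c hc i hci]
  have hqc : q - c = 0 := by
    by_contra h
    have hpos := hA.dotProduct_mulVec_pos h
    rw [star_trivial] at hpos
    exact (Finset.sum_nonpos fun i _ => hterm i).not_gt hpos
  rwa [sub_eq_zero.mp hqc]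

theorem comparisonMatrix_apply_le [DecidableEq ι] (M : Matrix ι ι ℝ) (i j : ι) :
    comparisonMatrix M i j ≤ M i j := by
  unfold comparisonMatrix
  split_ifs with h
  · rw [h]
  · exact neg_abs_le _

section comparisonMatrix

variable [Fintype ι] [DecidableEq ι] (M : Matrix ι ι ℝ)

theorem comparisonMatrix_mulVec_le {d : ι → ℝ} (hd : 0 ≤ d) :
    comparisonMatrix M *ᵥ d ≤ M *ᵥ d :=
  fun i => Finset.sum_le_sum fun j _ =>
    mul_le_mul_of_nonneg_right (comparisonMatrix_apply_le M i j) (hd j)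

theorem dotProduct_comparisonMatrix_mulVec_abs_le (x : ι → ℝ) :
    |x| ⬝ᵥ (comparisonMatrix M *ᵥ |x|) ≤ x ⬝ᵥ (M *ᵥ x) := by
  simp only [dotProduct, mulVec, Finset.mul_sum]
  refine Finset.sum_le_sum fun i _ => Finset.sum_le_sum fun j _ => ?_
  simp only [comparisonMatrix, Pi.abs_apply]
  split_ifs with h
  · subst h
    exact le_of_eq (by linear_combination M i i * abs_mul_abs_self (x i))
  · have := neg_abs_le (x i * (M i j * x j))
    simp only [abs_mul] at this
    linarith

variable {M}

theorem Matrix.PosDef.of_comparisonMatrix (hM : M.IsSymm) (h : (comparisonMatrix M).PosDef) :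
    M.PosDef := by
  refine .of_dotProduct_mulVec_pos (isHermitian_iff_isSymm.mpr hM) fun x hx => ?_
  have := h.dotProduct_mulVec_pos (x := |x|) (by simpa using hx)
  rw [star_trivial] at this ⊢
  exact this.trans_le (dotProduct_comparisonMatrix_mulVec_abs_le M x)

end comparisonMatrix

theorem two_mul_mul_le_add_abs_mul {x c d : ℝ} (hc : c ∈ Icc 0 d) :
    2 * (x * c) ≤ (x + |x|) * d := by
  obtain ⟨h0, hd⟩ := hc
  rcases abs_cases x with ⟨h, hx⟩ | ⟨h, hx⟩ <;> rw [h] <;> nlinarith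

theorem sub_abs_mul_le_two_mul_mul {x c d : ℝ} (hc : c ∈ Icc 0 d) :
    (x - |x|) * d ≤ 2 * (x * c) := by
  obtain ⟨h0, hd⟩ := hc
  rcases abs_cases x with ⟨h, hx⟩ | ⟨h, hx⟩ <;> rw [h] <;> nlinarith

section faces

variable [Fintype ι] [DecidableEq ι] (M : Matrix ι ι ℝ) {c d : ι → ℝ} {i : ι}

theorem two_mul_mulVec_le_sub_comparisonMatrix_mulVec (hc : c ∈ Icc 0 d) (hci : c i = 0) :
    2 * (M *ᵥ c) i ≤ ((M - comparisonMatrix M) *ᵥ d) i := by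
  simp only [mulVec, dotProduct, Finset.mul_sum]
  refine Finset.sum_le_sum fun j _ => ?_
  simp only [Matrix.sub_apply, comparisonMatrix]
  split_ifs with h
  · subst h
    simp [hci]
  · rw [sub_neg_eq_add]
    exact two_mul_mul_le_add_abs_mul ⟨hc.1 j, hc.2 j⟩

theorem add_comparisonMatrix_mulVec_le_two_mul_mulVec (hc : c ∈ Icc 0 d) (hci : c i = d i) :
    ((M + comparisonMatrix M) *ᵥ d) i ≤ 2 * (M *ᵥ c) i := by
  simp only [mulVec, dotProduct, Finset.mul_sum]
  refine Finset.sum_le_sum fun j _ => ?_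
  simp only [Matrix.add_apply, comparisonMatrix]
  split_ifs with h
  · subst h
    rw [hci]
    linarith
  · rw [← sub_eq_add_neg]
    exact sub_abs_mul_le_two_mul_mul ⟨hc.1 j, hc.2 j⟩

end faces

theorem submatrix_mulVec_apply [Fintype ι] [Fintype κ] {e : κ → ι} (he : Injective e)
    (M : Matrix ι ι ℝ) (c : κ → ℝ) (k : κ) :
    (M.submatrix e e *ᵥ c) k = (M *ᵥ extend e c 0) (e k) :=
  Fintype.sum_of_injective e he _ _
    (fun j hj => by rw [extend_apply' _ _ _ (by simpa using hj), Pi.zero_apply, mul_zero])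
    (fun j => by simp only [he.extend_apply, submatrix_apply])

theorem extend_mem_Icc {e : κ → ι} (he : Injective e) {c : κ → ℝ} {d : ι → ℝ} (hd : 0 ≤ d)
    (hc : c ∈ Icc 0 (d ∘ e)) : extend e c 0 ∈ Icc 0 d := by
  refine ⟨extend_nonneg hc.1 le_rfl, fun j => ?_⟩
  by_cases hj : ∃ k, e k = j
  · obtain ⟨k, rfl⟩ := hj
    rw [he.extend_apply]
    exact hc.2 k
  · rw [extend_apply' _ _ _ hj]
    exact hd j

theorem stieltjes_comparison_n_step_vector
    {n : ℕ} (M : Matrix (Fin n) (Fin n) ℝ) (hsym : M.IsSymm)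
    (hcmp : (comparisonMatrix M).PosDef) :
    M.PosDef ∧
      ∀ d : Fin n → ℝ, (∀ i, 0 < d i) →
        (∀ i, 0 < (comparisonMatrix M).mulVec d i) →
        ∀ p : Fin n → ℝ,
          (p = fun i => (1 / 2) * (M.mulVec d i + (comparisonMatrix M).mulVec d i)) →
          (∀ i, 0 < p i) ∧
            ∀ α : Finset (Fin n), α.Nonempty →
              ∀ a : {x // x ∈ α},
                0 ≤ ((M.submatrix (Subtype.val : {x // x ∈ α} → Fin n)
                      (Subtype.val : {x // x ∈ α} → Fin n))⁻¹).mulVec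
                    (fun b : {x // x ∈ α} => p (b : Fin n)) a := by
  have hM := Matrix.PosDef.of_comparisonMatrix hsym hcmp
  refine ⟨hM, fun d hd hMd p hp => ?_⟩
  have hd0 : 0 ≤ d := fun i => (hd i).le
  subst hp
  refine ⟨fun i => by linarith [comparisonMatrix_mulVec_le M hd0 i, hMd i], fun α _ a => ?_⟩
  have hval : Injective (Subtype.val : α → Fin n) := Subtype.val_injective
  set A := M.submatrix (Subtype.val : α → Fin n) Subtype.val
  have hA : A.PosDef := hM.submatrix hval
  have hAq : ∀ y, A *ᵥ (A⁻¹ *ᵥ y) = y := fun y => by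
    rw [mulVec_mulVec, mul_nonsing_inv A (A.isUnit_iff_isUnit_det.mp hA.isUnit), one_mulVec]
  refine (hA.mem_Icc_of_inward_on_faces (l := 0) (u := d ∘ Subtype.val)
    (fun b => hd0 b) ?_ ?_).1 a <;> intro c hc b hcb <;> rw [hAq, submatrix_mulVec_apply hval]
  · have := two_mul_mulVec_le_sub_comparisonMatrix_mulVec M (extend_mem_Icc hval hd0 hc)
      (i := b) (by rw [hval.extend_apply]; exact hcb)
    rw [sub_mulVec, Pi.sub_apply] at this
    linarith [hMd b]
  · have := add_comparisonMatrix_mulVec_le_two_mul_mulVec M (extend_mem_Icc hval hd0 hc)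
      (i := b) (by rw [hval.extend_apply]; exact hcb)
    rw [add_mulVec, Pi.add_apply] at this
    linarith
end
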